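/- Let G be a connected graph with v vertices and e edges. For all m ∈ ℕ, P_DP(G,m) = m^v (m-1)^e / m^e if and only if G is a tree. -/

import Mathlib

open SimpleGraph

/-- The number of proper `m`-colorings of a graph `G`. -/
noncomputable def numColorings {V : Type} (G : SimpleGraph V) (m : ℕ) : ℕ :=
  Nat.card {c : V → Fin m // ∀ ⦃a b : V⦄, G.Adj a b → c a ≠ c b}

/-- An `m`-fold cover `(L, H)` of a graph `G`. -/
structure DPCover {V : Type} (G : SimpleGraph V) (m : ℕ) where
  X : Type
  H : SimpleGraph X
  L : V → Set X
  partition : ∀ x : X, ∃! v : V, x ∈ L v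
  fold : ∀ v : V, Nat.card (L v) = m
  cliques : ∀ v : V, ∀ x ∈ L v, ∀ y ∈ L v, x ≠ y → H.Adj x y
  cross : ∀ u v : V, ∀ x ∈ L u, ∀ y ∈ L v, H.Adj x y → u = v ∨ G.Adj u v
  matching : ∀ u v : V, G.Adj u v → ∀ x ∈ L u, ∀ y ∈ L v, ∀ z ∈ L v,
      H.Adj x y → H.Adj x z → y = z
  matching' : ∀ u v : V, G.Adj u v → ∀ y ∈ L u, ∀ z ∈ L u, ∀ x ∈ L v,
      H.Adj y x → H.Adj z x → y = z

/-- A cover is full if for each edge `uv` of `G` the matching between `L u` and `L v`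
is a perfect matching. -/
def DPCover.IsFull {V : Type} {G : SimpleGraph V} {m : ℕ} (C : DPCover G m) : Prop :=
  ∀ u v : V, G.Adj u v → ∀ x ∈ C.L u, ∃ y ∈ C.L v, C.H.Adj x y

/-- An `H`-coloring of `G`, viewed as an independent transversal of the lists. -/
def DPCover.IsColoring {V : Type} {G : SimpleGraph V} {m : ℕ} (C : DPCover G m)
    (f : V → C.X) : Prop :=
  (∀ v : V, f v ∈ C.L v) ∧ ∀ u v : V, u ≠ v → ¬ C.H.Adj (f u) (f v)

/-- `P_DP(G, 𝓗)`, the number of `𝓗`-colorings of `G`. -/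
noncomputable def DPCover.count {V : Type} {G : SimpleGraph V} {m : ℕ}
    (C : DPCover G m) : ℕ :=
  Nat.card {f : V → C.X // C.IsColoring f}

/-- The DP color function `P_DP(G, m)`. -/
noncomputable def PDP {V : Type} (G : SimpleGraph V) (m : ℕ) : ℕ :=
  sInf {n : ℕ | ∃ C : DPCover G m, C.count = n}

/-- The DP-chromatic number `χ_DP(G)`. -/
noncomputable def chiDP {V : Type} (G : SimpleGraph V) : ℕ :=
  sInf {m : ℕ | ∀ C : DPCover G m, ∃ f : V → C.X, C.IsColoring f}

/-- A canonical labeling of an `m`-fold cover. -/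
def DPCover.HasCanonicalLabeling {V : Type} {G : SimpleGraph V} {m : ℕ}
    (C : DPCover G m) : Prop :=
  ∃ φ : V × Fin m → C.X, Function.Bijective φ ∧ (∀ v j, φ (v, j) ∈ C.L v) ∧
    ∀ u v : V, G.Adj u v → ∀ j : Fin m, C.H.Adj (φ (u, j)) (φ (v, j))

/-- A graph is 2-connected if it has at least 3 vertices, is connected, and
remains connected after deleting any single vertex. -/
def TwoConnected {V : Type} (G : SimpleGraph V) : Prop :=
  3 ≤ Nat.card V ∧ G.Connected ∧ ∀ v : V, (G.induce ({v}ᶜ : Set V)).Connected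

/-!
A tree has no cycle, so colouring it one vertex at a time in order of distance from a root, each
new vertex has exactly one coloured neighbour. In an `m`-fold cover that neighbour's colour
blocks at most one of the `m` colours of the new vertex, and exactly one when the matching is
perfect, so `P_DP(G, m) = m (m - 1)^(v - 1)`, which is the claimed formula since `e = v - 1`.
If `G` has a cycle, some edge `uv` is not a bridge; the 2-fold cover that is crossed on every
edge except `uv` forces equal colours across every edge of `G - uv`, hence on `u` and `v`, while
`uv` itself forbids that, so `P_DP(G, 2) = 0 ≠ 2^v / 2^e`.
-/

namespace SimpleGraph

variable {V : Type} {G : SimpleGraph V}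

lemma Reachable.eq_of_forall_adj_eq {β : Type*} {c : V → β} {u v : V}
    (h : ∀ x y, G.Adj x y → c x = c y) (huv : G.Reachable u v) : c u = c v := by
  obtain ⟨p⟩ := huv
  induction p with
  | nil => rfl
  | cons hxy _ ih => exact (h _ _ hxy).trans ih

lemma Walk.dist_le_of_mem_support {r u v : V} (p : G.Walk r u) (hv : v ∈ p.support) :
    G.dist r v ≤ p.length := by
  classical
  exact (dist_le _).trans (p.length_takeUntil_le_length hv)

lemma Connected.exists_adj_dist_lt (hG : G.Connected) (r : V) {v : V} (hv : v ≠ r) :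
    ∃ u, G.Adj u v ∧ G.dist r u < G.dist r v := by
  obtain ⟨p, hp⟩ := hG.exists_walk_length_eq_dist v r
  cases p with
  | nil => exact absurd rfl hv
  | cons h p =>
    refine ⟨_, h.symm, ?_⟩
    rw [dist_comm, dist_comm (v := v), ← hp, Walk.length_cons]
    exact Nat.lt_succ_of_le (dist_le p)

lemma IsTree.eq_of_adj_of_dist_le (hT : G.IsTree) (r : V) {u w v : V} (hu : G.Adj u v)
    (hw : G.Adj w v) (hdu : G.dist r u ≤ G.dist r v) (hdw : G.dist r w ≤ G.dist r v) :
    u = w := by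
  obtain ⟨q, hq, -⟩ := hT.connected.exists_path_of_dist r v
  have eq_penultimate {u} (hu : G.Adj u v) (hdu : G.dist r u ≤ G.dist r v) :
      u = q.penultimate := by
    obtain ⟨p, hp, hlen⟩ := hT.connected.exists_path_of_dist r u
    have hv : v ∉ p.support := fun h =>
      (p.dist_le_of_mem_support h).not_gt (hlen ▸ hdu.lt_of_ne (hT.dist_ne_of_adj r hu))
    exact hT.isAcyclic.eq_penultimate_of_adj_end hq hu.symm
      (hT.isAcyclic.mem_support_of_ne_mem_support_of_adj_of_isPath hq hp hu.symm hv)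
  exact (eq_penultimate hu hdu).trans (eq_penultimate hw hdw).symm

end SimpleGraph

lemma Fin.eq_of_ne_rev {i j : Fin 2} (h : j ≠ i.rev) : j = i := by
  revert i j
  decide

namespace DPCover

variable {V : Type} {G : SimpleGraph V} {m : ℕ}

variable (G) in
/-- The matching over the edge `e` is `i ↦ τ e i`; involutivity makes it independent of the
orientation of `e`. -/
def ofInvolutions (τ : Sym2 V → Fin m → Fin m)
    (hτ : ∀ e, Function.Involutive (τ e)) : DPCover G m where
  X := V × Fin m
  H :=
    { Adj x y := (x.1 = y.1 ∧ x.2 ≠ y.2) ∨ (G.Adj x.1 y.1 ∧ y.2 = τ s(x.1, y.1) x.2)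
      symm := ⟨by
        rintro ⟨u, i⟩ ⟨v, j⟩ (⟨huv, hij⟩ | ⟨huv, hij⟩)
        · exact .inl ⟨huv.symm, hij.symm⟩
        · exact .inr ⟨huv.symm, by dsimp only at hij ⊢; rw [Sym2.eq_swap, hij, hτ]⟩⟩
      loopless := ⟨fun x h => h.elim (fun h => h.2 rfl) (fun h => G.loopless.irrefl _ h.1)⟩ }
  L v := Set.range (Prod.mk v)
  partition x := ⟨x.1, ⟨x.2, rfl⟩, fun _ ⟨_, h⟩ => h ▸ rfl⟩
  fold v := Nat.card_range_of_injective (Prod.mk_right_injective v) |>.trans (Nat.card_fin m)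
  cliques := by
    rintro v _ ⟨i, rfl⟩ _ ⟨j, rfl⟩ hne
    exact .inl ⟨rfl, fun h => hne (Prod.ext rfl h)⟩
  cross := by
    rintro u v _ ⟨i, rfl⟩ _ ⟨j, rfl⟩ (⟨h, -⟩ | ⟨h, -⟩)
    exacts [.inl h, .inr h]
  matching := by
    rintro u v huv _ ⟨i, rfl⟩ _ ⟨j, rfl⟩ _ ⟨k, rfl⟩ hj hk
    simp only [huv.ne, false_and, false_or] at hj hk
    rw [hj.2, hk.2]
  matching' := by
    rintro u v huv _ ⟨i, rfl⟩ _ ⟨j, rfl⟩ _ ⟨k, rfl⟩ hi hj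
    simp only [huv.ne, false_and, false_or] at hi hj
    rw [(hτ _).injective (hi.2.symm.trans hj.2)]

lemma ofInvolutions_isFull (τ : Sym2 V → Fin m → Fin m)
    (hτ : ∀ e, Function.Involutive (τ e)) :
    (ofInvolutions G τ hτ).IsFull := by
  rintro u v huv _ ⟨i, rfl⟩
  exact ⟨(v, τ s(u, v) i), ⟨_, rfl⟩, .inr ⟨huv, rfl⟩⟩

variable (G) in
noncomputable def untwisted (m : ℕ) : DPCover G m :=
  ofInvolutions G (fun _ => id) fun _ _ => rfl

open Classical in
variable (G) in
noncomputable def twistedAt (e₀ : Sym2 V) : DPCover G 2 :=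
  ofInvolutions G (fun e => if e = e₀ then id else Fin.rev) fun e => by
    split_ifs
    exacts [fun _ => rfl, Fin.rev_involutive]

lemma not_isColoring_twistedAt {u v : V} (huv : G.Adj u v)
    (hreach : (G.deleteEdges {s(u, v)}).Reachable u v) (f : V → (twistedAt G s(u, v)).X) :
    ¬ (twistedAt G s(u, v)).IsColoring f := by
  classical
  rintro ⟨hfL, hfH⟩
  choose c hc using hfL
  have hc_adj {x y} (hxy : G.Adj x y) :
      c y ≠ (if s(x, y) = s(u, v) then id else Fin.rev) (c x) := fun h =>
    hfH x y hxy.ne (by rw [← hc x, ← hc y]; exact .inr ⟨hxy, h⟩)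
  have hconst : c u = c v := hreach.eq_of_forall_adj_eq fun x y hxy => by
    rw [deleteEdges_adj, Set.mem_singleton_iff] at hxy
    have := hc_adj hxy.1
    rw [if_neg hxy.2] at this
    exact (Fin.eq_of_ne_rev this).symm
  exact hc_adj huv (by rw [if_pos rfl, hconst]; rfl)

variable (C : DPCover G m)

lemma finite_L (hm : m ≠ 0) (v : V) : Finite (C.L v) :=
  Nat.finite_of_card_ne_zero (by rwa [C.fold v])

def PartialColoring (s : Set V) : Type :=
  {f : s → C.X //
    (∀ v : s, f v ∈ C.L v) ∧ ∀ u v : s, (u : V) ≠ v → ¬ C.H.Adj (f u) (f v)}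

lemma count_eq_card_partialColoring_univ : C.count = Nat.card (C.PartialColoring Set.univ) :=
  Nat.card_congr
    { toFun f := ⟨fun v => f.1 v, fun v => f.2.1 v, fun u v => f.2.2 u v⟩
      invFun g := ⟨fun v => g.1 ⟨v, trivial⟩, fun v => g.2.1 ⟨v, trivial⟩,
        fun u v => g.2.2 ⟨u, trivial⟩ ⟨v, trivial⟩⟩
      left_inv _ := rfl
      right_inv _ := rfl }

lemma finite_partialColoring (hm : m ≠ 0) {s : Set V} (hs : s.Finite) :
    Finite (C.PartialColoring s) :=
  have := hs.to_subtype
  have := C.finite_L hm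
  Finite.of_injective (fun f (v : s) => (⟨f.1 v, f.2.1 v⟩ : C.L v)) fun _ _ h =>
    Subtype.ext <| funext fun v => congrArg Subtype.val (congrFun h v)

lemma card_partialColoring_singleton (a : V) : Nat.card (C.PartialColoring {a}) = m :=
  (Nat.card_congr (α := C.PartialColoring {a}) (β := C.L a)
    { toFun f := ⟨f.1 ⟨a, rfl⟩, f.2.1 ⟨a, rfl⟩⟩
      invFun x := ⟨fun _ => x, fun v => by rw [Set.mem_singleton_iff.mp v.2]; exact x.2,
        fun u v huv => (huv (u.2.trans v.2.symm)).elim⟩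
      left_inv f := Subtype.ext <| funext fun ⟨v, hv⟩ => by subst hv; rfl
      right_inv _ := rfl }).trans (C.fold a)

def extensions {s : Set V} (g : C.PartialColoring s) (a : V) : Set C.X :=
  {x ∈ C.L a | ∀ u : s, ¬ C.H.Adj (g.1 u) x}

open Classical in
noncomputable def insertEquiv {s : Set V} {a : V} (ha : a ∉ s) :
    C.PartialColoring (insert a s) ≃ Σ g : C.PartialColoring s, C.extensions g a where
  toFun f :=
    ⟨⟨fun u => f.1 ⟨u, .inr u.2⟩, fun u => f.2.1 ⟨u, .inr u.2⟩,
        fun u v huv => f.2.2 ⟨u, .inr u.2⟩ ⟨v, .inr v.2⟩ huv⟩,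
      f.1 ⟨a, .inl rfl⟩, f.2.1 ⟨a, .inl rfl⟩,
      fun u => f.2.2 ⟨u, .inr u.2⟩ ⟨a, .inl rfl⟩ fun h : (u : V) = a => ha (h ▸ u.2)⟩
  invFun gx :=
    ⟨fun v => if h : (v : V) ∈ s then gx.1.1 ⟨v, h⟩ else gx.2, by
      have eq_a (v : ↥(insert a s)) (h : (v : V) ∉ s) : (v : V) = a := v.2.resolve_right h
      refine ⟨fun v => ?_, fun u v huv => ?_⟩ <;> dsimp only
      · split_ifs with h
        · exact gx.1.2.1 ⟨v, h⟩
        · rw [eq_a v h]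
          exact gx.2.2.1
      · split_ifs with hu hv hv
        · exact gx.1.2.2 ⟨u, hu⟩ ⟨v, hv⟩ huv
        · exact gx.2.2.2 ⟨u, hu⟩
        · exact fun h => gx.2.2.2 ⟨v, hv⟩ h.symm
        · exact absurd ((eq_a u hu).trans (eq_a v hv).symm) huv⟩
  left_inv f := Subtype.ext <| funext fun v => by
    by_cases h : (v : V) ∈ s
    · exact dif_pos h
    · exact (dif_neg h).trans (congrArg f.1 (Subtype.ext (v.2.resolve_right h).symm))
  right_inv := by
    rintro ⟨g, x⟩
    exact Sigma.subtype_ext (Subtype.ext <| funext fun u => dif_pos u.2) (dif_neg ha)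

lemma le_card_extensions (hm : m ≠ 0) {s : Set V} {a : V} (ha : a ∉ s)
    (hnbr : ∀ u ∈ s, ∀ w ∈ s, G.Adj u a → G.Adj w a → u = w) (g : C.PartialColoring s) :
    m - 1 ≤ Nat.card (C.extensions g a) := by
  have := C.finite_L hm a
  set B := {x ∈ C.L a | ∃ u : s, C.H.Adj (g.1 u) x}
  have adj_of_mem_B (u : s) {x} (hx : x ∈ C.L a) (h : C.H.Adj (g.1 u) x) : G.Adj u a :=
    (C.cross u a _ (g.2.1 u) x hx h).resolve_left fun hua => ha (hua ▸ u.2)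
  have hB : B.Subsingleton := by
    rintro x ⟨hx, u, hux⟩ y ⟨hy, w, hwy⟩
    obtain rfl : u = w := Subtype.ext <|
      hnbr u u.2 w w.2 (adj_of_mem_B u hx hux) (adj_of_mem_B w hy hwy)
    exact C.matching u a (adj_of_mem_B u hx hux) _ (g.2.1 u) x hx y hy hux hwy
  have hext : C.extensions g a = C.L a \ B := by
    ext x
    simp only [extensions, B, Set.mem_ofPred_eq, Set.mem_sdiff, not_and, not_exists]
    exact ⟨fun h => ⟨h.1, fun _ => h.2⟩, fun h => ⟨h.1, h.2 h.1⟩⟩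
  calc m - 1 ≤ (C.L a).ncard - B.ncard := by
        have := (Set.ncard_le_one_iff_subsingleton (s := B)).mpr hB
        rw [← Nat.card_coe_set_eq, C.fold a]
        omega
    _ ≤ (C.L a \ B).ncard := Set.le_ncard_sdiff B (C.L a) hB.finite
    _ = Nat.card (C.extensions g a) := by rw [hext, Nat.card_coe_set_eq]

lemma card_extensions_le (hm : m ≠ 0) (hC : C.IsFull) {s : Set V} {a p : V} (hp : p ∈ s)
    (hpa : G.Adj p a) (g : C.PartialColoring s) :
    Nat.card (C.extensions g a) ≤ m - 1 := by
  have := C.finite_L hm a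
  obtain ⟨y, hy, hgy⟩ := hC p a hpa _ (g.2.1 ⟨p, hp⟩)
  have hsub : C.extensions g a ⊆ C.L a \ {y} := fun x hx =>
    ⟨hx.1, fun hxy : x = y => hx.2 ⟨p, hp⟩ (hxy ▸ hgy)⟩
  calc Nat.card (C.extensions g a) ≤ (C.L a \ {y}).ncard := by
        rw [Nat.card_coe_set_eq]
        exact Set.ncard_le_ncard hsub
    _ = m - 1 := by rw [Set.ncard_sdiff_singleton_of_mem hy, ← Nat.card_coe_set_eq, C.fold a]

lemma card_partialColoring_insert (hm : m ≠ 0) {s : Set V} {a : V} (ha : a ∉ s)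
    [Fintype (C.PartialColoring s)] :
    Nat.card (C.PartialColoring (insert a s)) =
      ∑ g : C.PartialColoring s, Nat.card (C.extensions g a) := by
  have := C.finite_L hm a
  have (g : C.PartialColoring s) : Finite (C.extensions g a) :=
    Finite.Set.subset (C.L a) fun _ => And.left
  rw [Nat.card_congr (C.insertEquiv ha), Nat.card_sigma]

lemma le_card_partialColoring_insert (hm : m ≠ 0) {s : Set V} (hs : s.Finite) {a : V}
    (ha : a ∉ s) (hnbr : ∀ u ∈ s, ∀ w ∈ s, G.Adj u a → G.Adj w a → u = w) :
    (m - 1) * Nat.card (C.PartialColoring s) ≤ Nat.card (C.PartialColoring (insert a s)) := by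
  have := C.finite_partialColoring hm hs
  have := Fintype.ofFinite (C.PartialColoring s)
  rw [C.card_partialColoring_insert hm ha, Nat.card_eq_fintype_card, mul_comm, ← smul_eq_mul]
  exact Finset.card_nsmul_le_sum _ _ _ fun g _ => C.le_card_extensions hm ha hnbr g

lemma card_partialColoring_insert_le (hm : m ≠ 0) (hC : C.IsFull) {s : Set V} (hs : s.Finite)
    {a p : V} (ha : a ∉ s) (hp : p ∈ s) (hpa : G.Adj p a) :
    Nat.card (C.PartialColoring (insert a s)) ≤ (m - 1) * Nat.card (C.PartialColoring s) := by
  have := C.finite_partialColoring hm hs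
  have := Fintype.ofFinite (C.PartialColoring s)
  rw [C.card_partialColoring_insert hm ha, Nat.card_eq_fintype_card, mul_comm, ← smul_eq_mul]
  exact Finset.sum_le_card_nsmul _ _ _ fun g _ => C.card_extensions_le hm hC hp hpa g

end DPCover

lemma Finset.card_insert_sub_one {α : Type*} [DecidableEq α] {s : Finset α} {a : α}
    (ha : a ∉ s) (hs : s.Nonempty) : (insert a s).card - 1 = s.card - 1 + 1 := by
  have := hs.card_pos
  rw [card_insert_of_notMem ha]
  omega

namespace SimpleGraph.IsTree

open Finset

variable {V : Type} [DecidableEq V] {G : SimpleGraph V} {m : ℕ}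

theorem le_card_partialColoring (hT : G.IsTree) (r : V) (C : DPCover G m) (hm : m ≠ 0)
    (s : Finset V) (hs : s.Nonempty) :
    m * (m - 1) ^ (#s - 1) ≤ Nat.card (C.PartialColoring s) := by
  induction s using induction_on_max_value (G.dist r) with
  | empty => exact absurd hs not_nonempty_empty
  | insert a s ha hmax ih =>
    obtain rfl | hs := s.eq_empty_or_nonempty
    · simp [C.card_partialColoring_singleton]
    have hnbr : ∀ u ∈ (s : Set V), ∀ w ∈ (s : Set V), G.Adj u a → G.Adj w a → u = w :=
      fun u hu w hw hua hwa => hT.eq_of_adj_of_dist_le r hua hwa (hmax u hu) (hmax w hw)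
    calc m * (m - 1) ^ (#(insert a s) - 1) = (m - 1) * (m * (m - 1) ^ (#s - 1)) := by
          rw [Finset.card_insert_sub_one ha hs]; ring
      _ ≤ (m - 1) * Nat.card (C.PartialColoring s) := Nat.mul_le_mul_left _ (ih hs)
      _ ≤ Nat.card (C.PartialColoring ↑(insert a s)) := by
          rw [coe_insert]
          exact C.le_card_partialColoring_insert hm s.finite_toSet (by simpa) hnbr

theorem card_partialColoring_le (hT : G.IsTree) (r : V) (C : DPCover G m) (hm : m ≠ 0)
    (hC : C.IsFull) (s : Finset V) (hs : s.Nonempty)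
    (hclosed : ∀ v ∈ s, ∀ u, G.Adj u v → G.dist r u < G.dist r v → u ∈ s) :
    Nat.card (C.PartialColoring s) ≤ m * (m - 1) ^ (#s - 1) := by
  induction s using induction_on_max_value (G.dist r) with
  | empty => exact absurd hs not_nonempty_empty
  | insert a s ha hmax ih =>
    obtain rfl | hs := s.eq_empty_or_nonempty
    · simp [C.card_partialColoring_singleton]
    have mem_of_lt {v u} (hv : v ∈ insert a s) (huv : G.Adj u v) (hu : G.dist r u < G.dist r v)
        (hva : G.dist r v ≤ G.dist r a) : u ∈ s :=
      (mem_insert.mp (hclosed v hv u huv hu)).resolve_left fun hua => (hua ▸ hu).not_ge hva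
    have har : a ≠ r := by
      rintro rfl
      obtain ⟨x, hx⟩ := hs
      have hx0 : G.dist a x = 0 := Nat.le_zero.mp ((hmax x hx).trans_eq dist_self)
      exact ha (hT.connected.dist_eq_zero_iff.mp hx0 ▸ hx)
    obtain ⟨p, hpa, hp⟩ := hT.connected.exists_adj_dist_lt r har
    calc Nat.card (C.PartialColoring ↑(insert a s))
        ≤ (m - 1) * Nat.card (C.PartialColoring s) := by
          rw [coe_insert]
          exact C.card_partialColoring_insert_le hm hC s.finite_toSet (by simpa)
            (mem_of_lt (mem_insert_self a s) hpa hp le_rfl) hpa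
      _ ≤ (m - 1) * (m * (m - 1) ^ (#s - 1)) := Nat.mul_le_mul_left _ <|
          ih hs fun v hv u huv hu => mem_of_lt (mem_insert_of_mem hv) huv hu (hmax v hv)
      _ = m * (m - 1) ^ (#(insert a s) - 1) := by rw [Finset.card_insert_sub_one ha hs]; ring

end SimpleGraph.IsTree

section PDP

variable {V : Type} {G : SimpleGraph V} {m : ℕ}

lemma PDP_le_count (C : DPCover G m) : PDP G m ≤ C.count :=
  Nat.sInf_le ⟨C, rfl⟩

lemma le_PDP {n : ℕ} (h : ∀ C : DPCover G m, n ≤ C.count) : n ≤ PDP G m :=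
  le_csInf ⟨_, DPCover.untwisted G m, rfl⟩ fun _ ⟨C, hC⟩ => hC ▸ h C

lemma PDP_eq_zero_of_forall_not_isColoring (C : DPCover G m) (hC : ∀ f, ¬ C.IsColoring f) :
    PDP G m = 0 :=
  have : IsEmpty {f // C.IsColoring f} := ⟨fun f => hC f.1 f.2⟩
  Nat.eq_zero_of_le_zero ((PDP_le_count C).trans_eq Nat.card_of_isEmpty)

lemma PDP_zero [Nonempty V] : PDP G 0 = 0 :=
  PDP_eq_zero_of_forall_not_isColoring (DPCover.untwisted G 0) fun f _ =>
    (f (Classical.arbitrary V)).2.elim0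

lemma PDP_two_eq_zero_of_not_isAcyclic (hG : ¬ G.IsAcyclic) : PDP G 2 = 0 := by
  simp only [isAcyclic_iff_forall_adj_isBridge, isBridge_iff, not_forall, not_not] at hG
  obtain ⟨u, v, huv, hreach⟩ := hG
  exact PDP_eq_zero_of_forall_not_isColoring _ (DPCover.not_isColoring_twistedAt huv hreach)

theorem SimpleGraph.IsTree.PDP_eq [Fintype V] (hT : G.IsTree) (m : ℕ) :
    PDP G m = m * (m - 1) ^ (Fintype.card V - 1) := by
  classical
  obtain rfl | hm := eq_or_ne m 0
  · have := hT.connected.nonempty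
    rw [PDP_zero, zero_mul]
  obtain ⟨r⟩ := hT.connected.nonempty
  have : Nonempty V := ⟨r⟩
  have hcount (C : DPCover G m) :
      C.count = Nat.card (C.PartialColoring ↑(Finset.univ : Finset V)) := by
    rw [Finset.coe_univ, C.count_eq_card_partialColoring_univ]
  apply le_antisymm
  · refine (PDP_le_count (DPCover.untwisted G m)).trans ?_
    rw [hcount, ← Finset.card_univ]
    exact hT.card_partialColoring_le r _ hm (DPCover.ofInvolutions_isFull _ _) _
      Finset.univ_nonempty fun _ _ u _ _ => Finset.mem_univ u
  · refine le_PDP fun C => ?_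
    rw [hcount, ← Finset.card_univ]
    exact hT.le_card_partialColoring r C hm _ Finset.univ_nonempty

end PDP

theorem stmt_8 {V : Type} [Fintype V] (G : SimpleGraph V) (hG : G.Connected)
    (v e : ℕ) (hv : Fintype.card V = v) (he : Nat.card G.edgeSet = e) :
    (∀ m : ℕ, (PDP G m : ℚ) = (m : ℚ) ^ v * ((m : ℚ) - 1) ^ e / (m : ℚ) ^ e) ↔
      G.IsTree := by
  refine ⟨fun h => ⟨hG, by_contra fun hcyc => ?_⟩, fun hT m => ?_⟩
  · have := h 2
    rw [PDP_two_eq_zero_of_not_isAcyclic hcyc] at this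
    norm_num at this
    exact (by positivity : (0 : ℚ) < 2 ^ v / 2 ^ e).ne this
  · obtain rfl : v = e + 1 := by
      rw [← hv, ← he, ← Nat.card_eq_fintype_card]
      exact ((isTree_iff_connected_and_card.mp hT).2).symm
    rw [hT.PDP_eq, hv, Nat.add_sub_cancel]
    rcases m with _ | m
    · simp
    · push_cast
      field_simp
      ring
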